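/- arXiv:2007.10539 — 2 statements merged into one kernel-verified Lean document; each statement's English description precedes it below -/
import Mathlib

section
/- Soundness of interpolant automata: let A be a finite automaton whose states are sets of valuations (predicates), with initial state True (the set of all valuations), unique accepting state False (the empty set), and whose transition relation satisfies that (I, α, J) ∈ Δ implies Post(I, α) ⊆ J. Then every word w accepted by A satisfies Post(True, w) ⊆ ∅, i.e., w is infeasible. -/
/-- A real-time instruction: guard, update relation, rates. -/
structure Instr (V : Type*) where
  guard : Set (V → ℝ)
  upd : (V → ℝ) → (V → ℝ) → Prop
  rate : V → ℝ

variable {V : Type*}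

/-- ν →^{α,δ} ν' -/
def step (α : Instr V) (δ : ℝ) (ν ν' : V → ℝ) : Prop :=
  ν ∈ α.guard ∧ ∃ ν'', α.upd ν ν'' ∧ ν' = fun v => ν'' v + δ * α.rate v

/-- Semantics [[α]] on sets of valuations. -/
def sem (α : Instr V) (K : Set (V → ℝ)) : Set (V → ℝ) :=
  {ν' | ∃ ν ∈ K, ∃ δ : ℝ, 0 ≤ δ ∧ step α δ ν ν'}

/-- Strongest-post operator extended to words. -/
def Post (K : Set (V → ℝ)) : List (Instr V) → Set (V → ℝ)
  | [] => K
  | α :: w => Post (sem α K) w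

/-- A run of a predicate-state automaton with transition relation Δ. -/
def Run (Δ : Set (Set (V → ℝ) × Instr V × Set (V → ℝ))) :
    Set (V → ℝ) → List (Instr V) → Set (V → ℝ) → Prop
  | q, [], q' => q' = q
  | q, α :: w, q' => ∃ q₁, (q, α, q₁) ∈ Δ ∧ Run Δ q₁ w q'

/-- Soundness of a predicate-state transition relation. -/
def Sound (Δ : Set (Set (V → ℝ) × Instr V × Set (V → ℝ))) : Prop :=
  ∀ q α q', (q, α, q') ∈ Δ → sem α q ⊆ q'


lemma sem_mono {V : Type*} (α : Instr V) {K K' : Set (V → ℝ)} (h : K ⊆ K') :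
    sem α K ⊆ sem α K' := by
  rintro ν' ⟨ν, hν, δ, hδ, hst⟩
  exact ⟨ν, h hν, δ, hδ, hst⟩

lemma post_run {V : Type*} (Δ : Set (Set (V → ℝ) × Instr V × Set (V → ℝ)))
    (hs : Sound Δ) (w : List (Instr V)) :
    ∀ q q' K, Run Δ q w q' → K ⊆ q → Post K w ⊆ q' := by
  induction w with
  | nil => intro q q' K hr hK; simp only [Run] at hr; subst hr; exact hK
  | cons α w ih =>
    rintro q q' K ⟨q₁, hΔ, hr⟩ hK
    exact ih q₁ q' (sem α K) hr (le_trans (sem_mono α hK) (hs q α q₁ hΔ))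

/-- Soundness of interpolant automata: every accepted word is infeasible. -/
theorem ita_sound (Δ : Set (Set (V → ℝ) × Instr V × Set (V → ℝ)))
    (hs : Sound Δ) (w : List (Instr V))
    (hacc : Run Δ Set.univ w (∅ : Set (V → ℝ))) :
    Post (Set.univ : Set (V → ℝ)) w ⊆ ∅ := by
  exact post_run Δ hs w Set.univ ∅ Set.univ hacc (le_refl _)
end

section
/- Extended union of sound interpolant automata: let R and T be finite automata whose states are sets of valuations, both sound (each transition (q, α, q') satisfies Post(q, α) ⊆ q'), with initial state True and accepting state False. Define the automaton R ⊎ T with states Q^R ∪ Q^T and transition relation {(p, α, p') | ∃(q, α, q') ∈ Δ^R ∪ Δ^T, p ⊆ q and p' ⊇ q'}. Then (1) L(R ⊎ T) ⊇ L(R) ∪ L(T), and (2) every word w ∈ L(R ⊎ T) satisfies Post(True, w) = ∅. -/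
variable {V : Type*}

lemma post_mono {V : Type*} (w : List (Instr V)) :
    ∀ {K K' : Set (V → ℝ)}, K ⊆ K' → Post K w ⊆ Post K' w := by
  induction w with
  | nil => intro K K' h; exact h
  | cons α w ih => intro K K' h; exact ih (sem_mono α h)

lemma run_mono {V : Type*} {Δ Δ' : Set (Set (V → ℝ) × Instr V × Set (V → ℝ))}
    (h : Δ ⊆ Δ') : ∀ {w : List (Instr V)} {q q'}, Run Δ q w q' → Run Δ' q w q' := by
  intro w
  induction w with
  | nil => intro q q' hr; exact hr
  | cons α w ih => rintro q q' ⟨q₁, hq₁, hr⟩; exact ⟨q₁, h hq₁, ih hr⟩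

lemma sound_run {V : Type*} {Δ : Set (Set (V → ℝ) × Instr V × Set (V → ℝ))}
    (hs : Sound Δ) : ∀ {w : List (Instr V)} {q q'}, Run Δ q w q' → Post q w ⊆ q' := by
  intro w
  induction w with
  | nil => intro q q' hr; simp [Run] at hr; simp [Post, hr]
  | cons α w ih =>
      rintro q q' ⟨q₁, hq₁, hr⟩
      exact (post_mono w (hs _ _ _ hq₁)).trans (ih hr)

/-- Extended union of sound interpolant automata: the language grows, and all
accepted words remain infeasible. -/
theorem extended_union
    (ΔR ΔT : Set (Set (V → ℝ) × Instr V × Set (V → ℝ)))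
    (hR : Sound ΔR) (hT : Sound ΔT) :
    (∀ w : List (Instr V),
        (Run ΔR Set.univ w (∅ : Set (V → ℝ)) ∨ Run ΔT Set.univ w (∅ : Set (V → ℝ))) →
        Run {pap' | ∃ q q', (q, pap'.2.1, q') ∈ ΔR ∪ ΔT ∧ pap'.1 ⊆ q ∧ q' ⊆ pap'.2.2}
          Set.univ w (∅ : Set (V → ℝ))) ∧
    (∀ w : List (Instr V),
        Run {pap' | ∃ q q', (q, pap'.2.1, q') ∈ ΔR ∪ ΔT ∧ pap'.1 ⊆ q ∧ q' ⊆ pap'.2.2}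
          Set.univ w (∅ : Set (V → ℝ)) →
        Post (Set.univ : Set (V → ℝ)) w = ∅) := by
  constructor
  · intro w hw
    have hsub : ∀ Δ₀ : Set (Set (V → ℝ) × Instr V × Set (V → ℝ)), Δ₀ ⊆ ΔR ∪ ΔT →
        Δ₀ ⊆ {pap' | ∃ q q', (q, pap'.2.1, q') ∈ ΔR ∪ ΔT ∧ pap'.1 ⊆ q ∧ q' ⊆ pap'.2.2} := by
      rintro Δ₀ h ⟨p, α, p'⟩ hp
      exact ⟨p, p', h hp, subset_rfl, subset_rfl⟩
    rcases hw with hw | hw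
    · exact run_mono (hsub ΔR Set.subset_union_left) hw
    · exact run_mono (hsub ΔT Set.subset_union_right) hw
  · intro w hw
    have hS : Sound {pap' | ∃ q q', (q, pap'.2.1, q') ∈ ΔR ∪ ΔT ∧ pap'.1 ⊆ q ∧ q' ⊆ pap'.2.2} := by
      rintro p α p' ⟨q, q', hqq, hpq, hq'p'⟩
      refine (sem_mono α hpq).trans (Set.Subset.trans ?_ hq'p')
      rcases hqq with h | h
      · exact hR _ _ _ h
      · exact hT _ _ _ h
    exact Set.subset_empty_iff.mp (sound_run hS hw)
end
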